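/- For every real number r ≥ 0, the optimal smoothing factor μ_opt(r) = (3r + 14)/(2r² + 21r + 50) satisfies μ_opt(r) ≤ 7/25, with equality at r = 0. -/
import Mathlib

noncomputable def μopt (r : ℝ) : ℝ := (3*r + 14) / (2*r^2 + 21*r + 50)

theorem mu_opt_bound :
    (∀ r : ℝ, 0 ≤ r → μopt r ≤ 7/25) ∧ μopt 0 = 7/25 := by
  constructor
  · intro r hr
    have hd : 0 < 2*r^2 + 21*r + 50 := by positivity
    rw [μopt, div_le_iff₀ hd]
    nlinarith
  · norm_num [μopt]
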